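/- Let I be a nonempty proper arc of [n], let σ_I be the permutation of [n] that reverses I, and let J ⊆ [n] be an arc. Then I ⋔* J if and only if the image σ_I(J) = {σ_I(x) : x ∈ J} is not an arc of [n]. -/

import Mathlib

open Fin.NatCast in
/-- The arc `{a, a+1, …, a+k}` (mod `n`) of `Fin n`. -/
def arcSet (n : ℕ) [NeZero n] (a : Fin n) (k : ℕ) : Set (Fin n) :=
  {x | ∃ t : ℕ, t ≤ k ∧ x = a + (t : Fin n)}

/-- `A` is an arc of `Fin n`. -/
def IsArc (n : ℕ) [NeZero n] (A : Set (Fin n)) : Prop :=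
  A.Nonempty ∧ ∃ (a : Fin n) (k : ℕ), k ≤ n - 1 ∧ A = arcSet n a k

/-- Two arcs strictly overlap. -/
def StrictOverlap {n : ℕ} (I J : Set (Fin n)) : Prop :=
  ¬ I ⊆ J ∧ ¬ J ⊆ I ∧ ¬ Iᶜ ⊆ J ∧ ¬ J ⊆ Iᶜ

open Classical in
open Fin.NatCast in
/-- The permutation of `Fin n` reversing the arc `{a, …, a+k}`: it sends `a + t`
to `a + (k - t)` for `t ≤ k` and fixes everything outside the arc. -/
noncomputable def arcRev (n : ℕ) [NeZero n] (a : Fin n) (k : ℕ) (x : Fin n) : Fin n :=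
  if (∃ t : ℕ, t ≤ k ∧ x = a + (t : Fin n)) then a + (k : Fin n) - (x - a) else x

/-!
Measure positions from `a`, so that `I = [0, k]` and `σ_I` is `t ↦ k - t` on `I`. If `J`
contains `I`, misses `I`, lies in `I` or contains `Iᶜ`, then `σ_I(J)` is `J`, `J`, the mirror
image of `J`, or the complement of the mirror image of the arc `Jᶜ`. Otherwise, replacing `J`
by `Jᶜ` if `a ∈ J`, we get `J = [c, c + m]` with `0 < c ≤ k < c + m ≤ n - 2`, and
`σ_I(J) = [0, k - c] ∪ [k + 1, c + m]` has two "last points" `x` (with `x + 1 ∉ σ_I(J)`),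
whereas an arc has only one.
-/

lemma StrictOverlap.compl_right {n : ℕ} {I J : Set (Fin n)} (h : StrictOverlap I J) :
    StrictOverlap I Jᶜ := by
  obtain ⟨hIJ, hJI, hIcJ, hJIc⟩ := h
  exact ⟨fun h => hJIc (Set.subset_compl_comm.1 h), fun h => hIcJ (Set.compl_subset_comm.1 h),
    fun h => hJI (Set.compl_subset_compl.1 h), fun h => hIJ (Set.compl_subset_compl.1 h)⟩

section Arcs

variable {n : ℕ} [NeZero n]

open Fin.NatCast Fin.CommRing

lemma add_val_sub (a x : Fin n) : a + ((x - a).val : Fin n) = x := by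
  rw [Fin.cast_val_eq_self, add_sub_cancel]

lemma val_add_natCast_sub_self (a : Fin n) {t : ℕ} (ht : t < n) :
    (a + (t : Fin n) - a).val = t := by
  rw [add_sub_cancel_left, Fin.val_cast_of_lt ht]

lemma mem_arcSet_iff {a x : Fin n} {k : ℕ} : x ∈ arcSet n a k ↔ (x - a).val ≤ k := by
  constructor
  · rintro ⟨t, ht, rfl⟩
    rw [add_sub_cancel_left, Fin.val_natCast]
    exact (Nat.mod_le t n).trans ht
  · exact fun h => ⟨(x - a).val, h, (add_val_sub a x).symm⟩

lemma self_mem_arcSet (a : Fin n) (k : ℕ) : a ∈ arcSet n a k :=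
  ⟨0, Nat.zero_le k, by simp⟩

lemma isArc_arcSet (a : Fin n) {k : ℕ} (hk : k ≤ n - 1) : IsArc n (arcSet n a k) :=
  ⟨⟨a, self_mem_arcSet a k⟩, a, k, hk, rfl⟩

lemma add_natCast_mem_arcSet_iff {a : Fin n} {k t : ℕ} (ht : t < n) :
    a + (t : Fin n) ∈ arcSet n a k ↔ t ≤ k := by
  rw [mem_arcSet_iff, val_add_natCast_sub_self a ht]

/-- The second disjunct is the part of the arc that wraps around past `a`. -/
lemma mem_arcSet_add_natCast_iff {a x : Fin n} {c m : ℕ} (hc : c < n) :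
    x ∈ arcSet n (a + c) m ↔
      (c ≤ (x - a).val ∧ (x - a).val ≤ c + m) ∨ (x - a).val + n ≤ c + m := by
  have hcv : ((c : Fin n)).val = c := Fin.val_cast_of_lt hc
  have hu := (x - a).is_lt
  rw [mem_arcSet_iff, sub_add_eq_sub_sub]
  rcases le_or_gt c (x - a).val with h | h
  · rw [Fin.coe_sub_iff_le.2 (by rw [Fin.le_def, hcv]; exact h), hcv]
    omega
  · rw [Fin.coe_sub_iff_lt.2 (by rw [Fin.lt_def, hcv]; exact h), hcv]
    omega

lemma compl_arcSet (a : Fin n) {k : ℕ} (hk : k + 2 ≤ n) :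
    (arcSet n a k)ᶜ = arcSet n (a + ((k + 1 : ℕ) : Fin n)) (n - 2 - k) := by
  ext x
  rw [Set.mem_compl_iff, mem_arcSet_iff, mem_arcSet_add_natCast_iff (by omega)]
  omega

lemma IsArc.compl {A : Set (Fin n)} (hA : IsArc n A) (hAc : Aᶜ.Nonempty) : IsArc n Aᶜ := by
  obtain ⟨-, e, l, -, rfl⟩ := hA
  obtain ⟨x, hx⟩ := hAc
  rw [Set.mem_compl_iff, mem_arcSet_iff] at hx
  have := (x - e).is_lt
  rw [compl_arcSet e (by omega)]
  exact isArc_arcSet _ (by omega)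

lemma eq_add_natCast_of_mem_arcSet_of_add_one_notMem {e x : Fin n} {l : ℕ}
    (hx : x ∈ arcSet n e l) (hx1 : x + 1 ∉ arcSet n e l) : x = e + (l : Fin n) := by
  rw [mem_arcSet_iff] at hx
  obtain hlt | heq := hx.lt_or_eq
  · exact absurd ⟨(x - e).val + 1, hlt, by rw [Nat.cast_succ, ← add_assoc, add_val_sub]⟩ hx1
  · rw [← heq, add_val_sub]

lemma IsArc.eq_of_add_one_notMem {A : Set (Fin n)} (hA : IsArc n A) {x y : Fin n}
    (hx : x ∈ A) (hx1 : x + 1 ∉ A) (hy : y ∈ A) (hy1 : y + 1 ∉ A) : x = y := by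
  obtain ⟨-, e, l, -, rfl⟩ := hA
  rw [eq_add_natCast_of_mem_arcSet_of_add_one_notMem hx hx1,
    eq_add_natCast_of_mem_arcSet_of_add_one_notMem hy hy1]

end Arcs

section Reversal

variable {n : ℕ} [NeZero n] {a : Fin n} {k : ℕ}

open Fin.NatCast Fin.CommRing

lemma arcRev_of_mem {x : Fin n} (hx : x ∈ arcSet n a k) :
    arcRev n a k x = a + (k : Fin n) - (x - a) :=
  if_pos hx

lemma arcRev_of_notMem {x : Fin n} (hx : x ∉ arcSet n a k) : arcRev n a k x = x :=
  if_neg hx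

lemma arcRev_add_natCast {t : ℕ} (ht : t ≤ k) :
    arcRev n a k (a + (t : Fin n)) = a + ((k - t : ℕ) : Fin n) := by
  rw [arcRev_of_mem ⟨t, ht, rfl⟩, Nat.cast_sub ht]
  ring

lemma arcRev_mem_arcSet {x : Fin n} (hx : x ∈ arcSet n a k) :
    arcRev n a k x ∈ arcSet n a k := by
  obtain ⟨t, ht, rfl⟩ := hx
  rw [arcRev_add_natCast ht]
  exact ⟨k - t, Nat.sub_le k t, rfl⟩

lemma arcRev_involutive : Function.Involutive (arcRev n a k) := by
  intro x
  by_cases hx : x ∈ arcSet n a k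
  · obtain ⟨t, ht, rfl⟩ := hx
    rw [arcRev_add_natCast ht, arcRev_add_natCast (Nat.sub_le k t), Nat.sub_sub_self ht]
  · rw [arcRev_of_notMem hx, arcRev_of_notMem hx]

lemma mem_image_arcRev_iff {J : Set (Fin n)} {x : Fin n} :
    x ∈ arcRev n a k '' J ↔ arcRev n a k x ∈ J :=
  Set.mem_image_iff_of_inverse arcRev_involutive.leftInverse arcRev_involutive.rightInverse

lemma image_arcRev_compl (J : Set (Fin n)) : arcRev n a k '' Jᶜ = (arcRev n a k '' J)ᶜ :=
  Set.image_compl_eq arcRev_involutive.bijective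

lemma image_arcRev_of_superset {J : Set (Fin n)} (h : arcSet n a k ⊆ J) :
    arcRev n a k '' J = J := by
  ext x
  rw [mem_image_arcRev_iff]
  by_cases hx : x ∈ arcSet n a k
  · exact iff_of_true (h (arcRev_mem_arcSet hx)) (h hx)
  · rw [arcRev_of_notMem hx]

lemma image_arcRev_of_subset_compl {J : Set (Fin n)} (h : J ⊆ (arcSet n a k)ᶜ) :
    arcRev n a k '' J = J := by
  have h' := image_arcRev_of_superset (Set.subset_compl_comm.1 h)
  rwa [image_arcRev_compl, compl_inj_iff] at h'

lemma image_arcRev_arcSet_of_subset {b : Fin n} {m : ℕ} (h : arcSet n b m ⊆ arcSet n a k) :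
    arcRev n a k '' arcSet n b m = arcSet n (arcRev n a k (b + (m : Fin n))) m := by
  have hrev : ∀ s ≤ m, arcRev n a k (b + (s : Fin n)) =
      arcRev n a k (b + (m : Fin n)) + ((m - s : ℕ) : Fin n) := by
    intro s hs
    rw [arcRev_of_mem (h ⟨s, hs, rfl⟩), arcRev_of_mem (h ⟨m, le_rfl, rfl⟩), Nat.cast_sub hs]
    ring
  ext x
  constructor
  · rintro ⟨_, ⟨s, hs, rfl⟩, rfl⟩
    exact ⟨m - s, Nat.sub_le m s, hrev s hs⟩
  · rintro ⟨t, ht, rfl⟩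
    refine ⟨b + ((m - t : ℕ) : Fin n), ⟨m - t, Nat.sub_le m t, rfl⟩, ?_⟩
    rw [hrev (m - t) (Nat.sub_le m t), Nat.sub_sub_self ht]

lemma isArc_image_arcRev_of_not_strictOverlap {J : Set (Fin n)} (hJ : IsArc n J)
    (h : ¬ StrictOverlap (arcSet n a k) J) : IsArc n (arcRev n a k '' J) := by
  have hcases : arcSet n a k ⊆ J ∨ J ⊆ arcSet n a k ∨ (arcSet n a k)ᶜ ⊆ J ∨
      J ⊆ (arcSet n a k)ᶜ := by
    unfold StrictOverlap at h
    tauto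
  rcases hcases with hIJ | hJI | hIcJ | hJIc
  · rwa [image_arcRev_of_superset hIJ]
  · obtain ⟨-, b, m, hm, rfl⟩ := hJ
    rw [image_arcRev_arcSet_of_subset hJI]
    exact isArc_arcSet _ hm
  · rcases Jᶜ.eq_empty_or_nonempty with hJc | hJc
    · rwa [image_arcRev_of_superset (by rw [Set.compl_empty_iff.1 hJc]; exact Set.subset_univ _)]
    · obtain ⟨-, b, m, hm, hJc_eq⟩ := hJ.compl hJc
      have himage : IsArc n (arcRev n a k '' Jᶜ) := by
        rw [hJc_eq, image_arcRev_arcSet_of_subset (hJc_eq ▸ Set.compl_subset_comm.1 hIcJ)]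
        exact isArc_arcSet _ hm
      rw [image_arcRev_compl] at himage
      simpa using himage.compl (by simpa using hJ.1.image (arcRev n a k))
  · rwa [image_arcRev_of_subset_compl hJIc]

lemma StrictOverlap.bounds_of_notMem {c m : ℕ} (hc : c < n)
    (hSO : StrictOverlap (arcSet n a k) (arcSet n (a + c) m)) (ha : a ∉ arcSet n (a + c) m) :
    0 < c ∧ c ≤ k ∧ k < c + m ∧ c + m + 2 ≤ n := by
  obtain ⟨-, hJI, hIcJ, hJIc⟩ := hSO
  obtain ⟨x, hxJ, hxI⟩ := Set.not_subset.1 hJI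
  obtain ⟨y, hyI, hyJ⟩ := Set.not_subset.1 hIcJ
  obtain ⟨z, hzJ, hzI⟩ := Set.not_subset.1 hJIc
  simp only [Set.mem_compl_iff, not_not, mem_arcSet_iff, mem_arcSet_add_natCast_iff hc,
    sub_self, Fin.val_zero] at ha hxJ hxI hyI hyJ hzJ hzI
  have := (y - a).is_lt
  omega

/-- The image has two distinct points `x` with `x + 1` outside it, namely `a + (k - c)` and
`a + (c + m)`, which no arc has. -/
lemma not_isArc_image_arcRev_arcSet {c m : ℕ} (hc : 0 < c) (hck : c ≤ k) (hkm : k < c + m)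
    (hmn : c + m + 2 ≤ n) : ¬ IsArc n (arcRev n a k '' arcSet n (a + c) m) := by
  intro hA
  have hJ : ∀ {t : ℕ}, t < n →
      (a + (t : Fin n) ∈ arcSet n (a + c) m ↔ (c ≤ t ∧ t ≤ c + m) ∨ t + n ≤ c + m) :=
    fun ht => by rw [mem_arcSet_add_natCast_iff (by omega), val_add_natCast_sub_self a ht]
  have hfix : ∀ {t : ℕ}, k < t → t < n → arcRev n a k (a + (t : Fin n)) = a + (t : Fin n) :=
    fun hkt ht => arcRev_of_notMem (by rw [add_natCast_mem_arcSet_iff ht]; omega)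
  have hp : a + ((k - c : ℕ) : Fin n) ∈ arcRev n a k '' arcSet n (a + c) m := by
    rw [mem_image_arcRev_iff, arcRev_add_natCast (Nat.sub_le k c), Nat.sub_sub_self hck]
    exact self_mem_arcSet _ m
  have hp1 : a + ((k - c : ℕ) : Fin n) + 1 ∉ arcRev n a k '' arcSet n (a + c) m := by
    rw [add_assoc, ← Nat.cast_succ, mem_image_arcRev_iff, arcRev_add_natCast (by omega),
      hJ (by omega)]
    omega
  have hq : a + ((c + m : ℕ) : Fin n) ∈ arcRev n a k '' arcSet n (a + c) m := by
    rw [mem_image_arcRev_iff, hfix (by omega) (by omega), hJ (by omega)]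
    omega
  have hq1 : a + ((c + m : ℕ) : Fin n) + 1 ∉ arcRev n a k '' arcSet n (a + c) m := by
    rw [add_assoc, ← Nat.cast_succ, mem_image_arcRev_iff, hfix (by omega) (by omega),
      hJ (by omega)]
    omega
  have hpq := congrArg (fun x => (x - a).val) (hA.eq_of_add_one_notMem hp hp1 hq hq1)
  simp only [val_add_natCast_sub_self a (show k - c < n by omega),
    val_add_natCast_sub_self a (show c + m < n by omega)] at hpq
  omega

lemma not_isArc_image_arcRev_of_strictOverlap {J : Set (Fin n)} (hJ : IsArc n J)
    (hSO : StrictOverlap (arcSet n a k) J) : ¬ IsArc n (arcRev n a k '' J) := by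
  wlog ha : a ∉ J generalizing J
  · -- `Jᶜ` is an arc strictly overlapping `I` and avoiding `a`, and `σ_I(Jᶜ) = σ_I(J)ᶜ`.
    have hJc : Jᶜ.Nonempty := by
      obtain ⟨x, -, hx⟩ := Set.not_subset.1 hSO.2.2.1
      exact ⟨x, hx⟩
    have h := this (hJ.compl hJc) hSO.compl_right (by simpa using ha)
    rw [image_arcRev_compl] at h
    exact fun hA => h (hA.compl (by rw [← image_arcRev_compl]; exact hJc.image _))
  obtain ⟨-, b, m, -, rfl⟩ := hJ
  rw [← add_val_sub a b] at hSO ha ⊢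
  obtain ⟨hc, hck, hkm, hmn⟩ := hSO.bounds_of_notMem (b - a).is_lt ha
  exact not_isArc_image_arcRev_arcSet hc hck hkm hmn

end Reversal

theorem statement9_general (n : ℕ) [NeZero n] (a : Fin n) (k : ℕ)
    (J : Set (Fin n)) (hJ : IsArc n J) :
    StrictOverlap (arcSet n a k) J ↔ ¬ IsArc n (arcRev n a k '' J) :=
  ⟨not_isArc_image_arcRev_of_strictOverlap hJ, not_imp_comm.1
    (isArc_image_arcRev_of_not_strictOverlap hJ)⟩

/-- A proper arc `I` strictly overlaps an arc `J` iff reversing `I` destroys the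
arc `J`, i.e. the image of `J` under the reversal of `I` is not an arc. -/
theorem statement9 (n : ℕ) [NeZero n] (a : Fin n) (k : ℕ) (hk : k ≤ n - 2)
    (J : Set (Fin n)) (hJ : IsArc n J) :
    StrictOverlap (arcSet n a k) J ↔ ¬ IsArc n (arcRev n a k '' J) :=
  statement9_general n a k J hJ
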